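/- arXiv:math/0408071 — 5 statements merged into one kernel-verified Lean document; each statement's English description precedes it below -/
import Mathlib

section
/- Let n ≥ 1 and let b : {(m,r) : 1 ≤ r ≤ m ≤ n} → ℝ_{>0} satisfy the commutation relation b(m,r)·b(m−r,s) = b(m,s)·b(m−s,r) whenever r + s ≤ m ≤ n, r,s ≥ 1. Define f(m) := b(m,1) and g(r) := b(r,r)/(f(1)·f(2)···f(r)). Then for all 1 ≤ r ≤ m ≤ n, b(m,r) = f(m−r+1)·f(m−r+2)···f(m)·g(r). -/
/-- If a positive array `b(m,r)` (for `1 ≤ r ≤ m ≤ n`) satisfies the commutation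
relation `b(m,r)·b(m−r,s) = b(m,s)·b(m−s,r)`, then with `f(m) := b(m,1)` and
`g(r) := b(r,r)/(f(1)⋯f(r))` one has `b(m,r) = f(m−r+1)⋯f(m)·g(r)`. -/
theorem stmt_1 (n : ℕ) (hn : 1 ≤ n) (b : ℕ → ℕ → ℝ)
    (hpos : ∀ m r, 1 ≤ r → r ≤ m → m ≤ n → 0 < b m r)
    (hcomm : ∀ m r s, 1 ≤ r → 1 ≤ s → r + s ≤ m → m ≤ n →
      b m r * b (m - r) s = b m s * b (m - s) r) :
    ∀ m r, 1 ≤ r → r ≤ m → m ≤ n →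
      b m r = (∏ i ∈ Finset.Icc (m - r + 1) m, b i 1) *
        (b r r / ∏ i ∈ Finset.Icc 1 r, b i 1) := by
  intro m r hr hrm hmn
  induction m with
  | zero => omega
  | succ k ih =>
    have hq : 0 < ∏ i ∈ Finset.Icc 1 r, b i 1 := by
      apply Finset.prod_pos
      intro i hi
      rw [Finset.mem_Icc] at hi
      exact hpos i 1 le_rfl hi.1 (by omega)
    rcases eq_or_lt_of_le hrm with h | h
    · -- m = r
      rw [← h]
      simp only [Nat.sub_self, Nat.zero_add]
      field_simp
    · -- r < k + 1
      have hrk : r ≤ k := by omega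
      have ihk := ih hrk (by omega)
      have hc := hcomm (k + 1) r 1 hr le_rfl (by omega) hmn
      simp only [Nat.add_sub_cancel] at hc
      have e1 : k + 1 - r = k - r + 1 := by omega
      rw [e1] at hc ⊢
      have hf : 0 < b (k - r + 1) 1 := hpos _ 1 le_rfl (by omega) (by omega)
      -- split products
      have e2 : ∏ i ∈ Finset.Icc (k - r + 1 + 1) (k + 1), b i 1
          = (∏ i ∈ Finset.Icc (k - r + 1 + 1) k, b i 1) * b (k + 1) 1 := by
        rw [Finset.prod_Icc_succ_top (by omega)]
      have e3 : ∏ i ∈ Finset.Icc (k - r + 1) k, b i 1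
          = b (k - r + 1) 1 * ∏ i ∈ Finset.Icc (k - r + 1 + 1) k, b i 1 := by
        rw [← Finset.Ico_add_one_right_eq_Icc, Finset.prod_eq_prod_Ico_succ_bot (by omega),
          Finset.Ico_add_one_right_eq_Icc]
      rw [e3] at ihk
      rw [e2]
      have : b (k + 1) r * b (k - r + 1) 1
          = b (k + 1) 1 * (b (k - r + 1) 1 * (∏ i ∈ Finset.Icc (k - r + 1 + 1) k, b i 1)
              * (b r r / ∏ i ∈ Finset.Icc 1 r, b i 1)) := by
        rw [hc, ihk]
      field_simp at this ⊢
      nlinarith [this, hf, hq]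
end

section
/- Fix τ ∈ [0,1] and γ > τ, and define for 1 ≤ r ≤ n: f(n) := n/(1−τ+(n−1)γ), g(r) := (γ−τ)_{r−1↑γ}/r!, and b(n,r) := f(n−r+1)·f(n−r+2)···f(n)·g(r). Then b satisfies the commutation relation b(n,r)·b(n−r,s) = b(n,s)·b(n−s,r) for all positive integers r, s with r + s ≤ n. -/
/-- `b9 τ γ n r = f(n−r+1)⋯f(n)·g(r)` with `f(m) = m/(1−τ+(m−1)γ)` and
`g(r) = (γ−τ)_{r−1↑γ}/r!`. -/
noncomputable def b9 (τ γ : ℝ) (m k : ℕ) : ℝ :=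
  (∏ i ∈ Finset.Icc (m - k + 1) m, (i : ℝ) / (1 - τ + ((i : ℝ) - 1) * γ)) *
    ((∏ i ∈ Finset.range (k - 1), (γ - τ + (i : ℝ) * γ)) / (Nat.factorial k : ℝ))

/-- The explicit solution `b(n,r) = f(n−r+1)⋯f(n)·g(r)` arising from the
`(α,θ)` regenerative partition structure satisfies the commutation relation
`b(n,r)·b(n−r,s) = b(n,s)·b(n−s,r)`. -/
theorem stmt_9 (τ γ : ℝ) (hτ0 : 0 ≤ τ) (hτ1 : τ ≤ 1) (hγ : τ < γ)
    (n r s : ℕ) (hr : 1 ≤ r) (hs : 1 ≤ s) (hrs : r + s ≤ n) :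
    b9 τ γ n r * b9 τ γ (n - r) s = b9 τ γ n s * b9 τ γ (n - s) r := by
  unfold b9
  simp only [Finset.Icc_add_one_left_eq_Ioc]
  have key : ∀ a b : ℕ, (∏ i ∈ Finset.Ioc (n - a) n, (i : ℝ) / (1 - τ + ((i : ℝ) - 1) * γ)) *
      (∏ i ∈ Finset.Ioc (n - a - b) (n - a), (i : ℝ) / (1 - τ + ((i : ℝ) - 1) * γ)) =
      ∏ i ∈ Finset.Ioc (n - (a + b)) n, (i : ℝ) / (1 - τ + ((i : ℝ) - 1) * γ) := by
    intro a b
    rw [mul_comm, Finset.prod_Ioc_consecutive _ (Nat.sub_le _ _) (Nat.sub_le _ _), Nat.sub_sub]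
  calc (∏ i ∈ Finset.Ioc (n - r) n, (i : ℝ) / (1 - τ + ((i : ℝ) - 1) * γ)) *
        ((∏ i ∈ Finset.range (r - 1), (γ - τ + (i : ℝ) * γ)) / (Nat.factorial r : ℝ)) *
      ((∏ i ∈ Finset.Ioc (n - r - s) (n - r), (i : ℝ) / (1 - τ + ((i : ℝ) - 1) * γ)) *
        ((∏ i ∈ Finset.range (s - 1), (γ - τ + (i : ℝ) * γ)) / (Nat.factorial s : ℝ)))
      = (∏ i ∈ Finset.Ioc (n - (r + s)) n, (i : ℝ) / (1 - τ + ((i : ℝ) - 1) * γ)) *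
        (((∏ i ∈ Finset.range (r - 1), (γ - τ + (i : ℝ) * γ)) / (Nat.factorial r : ℝ)) *
         ((∏ i ∈ Finset.range (s - 1), (γ - τ + (i : ℝ) * γ)) / (Nat.factorial s : ℝ))) := by
        rw [← key r s]; ring
    _ = (∏ i ∈ Finset.Ioc (n - s) n, (i : ℝ) / (1 - τ + ((i : ℝ) - 1) * γ)) *
        ((∏ i ∈ Finset.range (s - 1), (γ - τ + (i : ℝ) * γ)) / (Nat.factorial s : ℝ)) *
      ((∏ i ∈ Finset.Ioc (n - s - r) (n - s), (i : ℝ) / (1 - τ + ((i : ℝ) - 1) * γ)) *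
        ((∏ i ∈ Finset.range (r - 1), (γ - τ + (i : ℝ) * γ)) / (Nat.factorial r : ℝ))) := by
        rw [add_comm r s, ← key s r]; ring
end

section
/- Let n ≥ 1 and λ be a partition of n with multiplicities (a_r) and ℓ = ∑_r a_r parts. Define the Ewens partition probability function with parameter θ > 0: p(λ) = n!·θ^ℓ/((θ)_{n↑1}) · ∏_r 1/(r^{a_r}·a_r!), where (θ)_{n↑1} = θ(θ+1)⋯(θ+n−1). Then for every partition λ of n and every part size x ∈ λ, with λ−{x} denoting λ with one part of size x removed, the ratio p(λ)·(x·a_x(λ)/n) / p(λ−{x}) depends only on n and x and not on λ; explicitly, p(λ)·(x·a_x(λ)/n) = [θ·(n−1)!·(θ)_{n−x↑1} / ((n−x)!·(θ)_{n↑1})] · p(λ−{x}). -/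
/-- The Ewens partition probability function with parameter `θ`, of a partition
encoded by its multiplicity function `a`:
`p(λ) = n!·θ^ℓ/(θ)_{n↑1} · ∏_r 1/(r^{a_r}·a_r!)`. -/
noncomputable def ewensP (θ : ℝ) (a : ℕ →₀ ℕ) : ℝ :=
  (Nat.factorial (a.sum fun r m => r * m) : ℝ) * θ ^ (a.sum fun _ m => m) /
      (∏ i ∈ Finset.range (a.sum fun r m => r * m), (θ + (i : ℝ))) *
    ∏ r ∈ a.support, 1 / ((r : ℝ) ^ (a r) * (Nat.factorial (a r) : ℝ))

/-- Kingman's regeneration identity for the Ewens partition structure under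
size-biased deletion: `p(λ)·(x·a_x/n) = q(n,x)·p(λ−{x})` with
`q(n,x) = θ·(n−1)!·(θ)_{n−x↑1}/((n−x)!·(θ)_{n↑1})`. -/
theorem stmt_10 (θ : ℝ) (hθ : 0 < θ) (n x : ℕ) (a : ℕ →₀ ℕ)
    (ha0 : a 0 = 0) (hn : (a.sum fun r m => r * m) = n) (hx : 1 ≤ a x) :
    ewensP θ a * ((x : ℝ) * (a x : ℝ) / (n : ℝ)) =
      (θ * (Nat.factorial (n - 1) : ℝ) * (∏ i ∈ Finset.range (n - x), (θ + (i : ℝ))) /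
        ((Nat.factorial (n - x) : ℝ) * ∏ i ∈ Finset.range n, (θ + (i : ℝ)))) *
        ewensP θ (a - Finsupp.single x 1) := by
  classical
  set b := a - Finsupp.single x 1 with hbdef
  have hx0 : x ≠ 0 := by rintro rfl; omega
  have hxmem : x ∈ a.support := Finsupp.mem_support_iff.mpr (by omega)
  have hb : ∀ r, b r = if r = x then a r - 1 else a r := by
    intro r
    simp only [hbdef, Finsupp.sub_apply, Finsupp.single_apply]
    split_ifs with h
    · simp [h.symm]
    · have : ¬ (x = r) := fun h' => h h'.symm
      simp [this]
  have hsupp : b.support ⊆ a.support := by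
    intro r hr
    rw [Finsupp.mem_support_iff] at hr ⊢
    rw [hb r] at hr
    split_ifs at hr with h <;> omega
  have hxn : x ≤ n := by
    have : x * a x ≤ a.sum fun r m => r * m := by
      rw [Finsupp.sum]
      exact Finset.single_le_sum (f := fun r => r * a r) (fun i _ => Nat.zero_le _) hxmem
    calc x ≤ x * a x := Nat.le_mul_of_pos_right x (by omega)
    _ ≤ n := by omega
  have hn0 : n ≠ 0 := by omega
  have hbsum : (b.sum fun r m => r * m) = n - x := by
    have h1 : (b.sum fun r m => r * m) = ∑ r ∈ a.support, r * b r :=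
      Finsupp.sum_of_support_subset b hsupp _ (fun i _ => by simp)
    have h2 : (∑ r ∈ a.support, r * b r) + x = ∑ r ∈ a.support, r * a r := by
      rw [← Finset.add_sum_erase _ _ hxmem, ← Finset.add_sum_erase _ (fun r => r * a r) hxmem]
      have heq : ∀ r ∈ a.support.erase x, r * b r = r * a r := by
        intro r hr
        rw [hb r, if_neg (Finset.ne_of_mem_erase hr)]
      rw [Finset.sum_congr rfl heq, hb x, if_pos rfl]
      have h3 : x * (a x - 1) + x = x * a x := by
        obtain ⟨m, hm⟩ : ∃ m, a x = m + 1 := ⟨a x - 1, by omega⟩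
        rw [hm, Nat.succ_sub_one]; ring
      omega
    have h3 : (∑ r ∈ a.support, r * a r) = n := by rw [← hn]; rfl
    omega
  have hbl : (b.sum fun _ m => m) + 1 = (a.sum fun _ m => m) := by
    have h1 : (b.sum fun _ m => m) = ∑ r ∈ a.support, b r :=
      Finsupp.sum_of_support_subset b hsupp _ (fun i _ => rfl)
    rw [h1, Finsupp.sum, ← Finset.add_sum_erase _ _ hxmem,
      ← Finset.add_sum_erase _ (fun r => a r) hxmem]
    have heq : ∀ r ∈ a.support.erase x, b r = a r := by
      intro r hr
      rw [hb r, if_neg (Finset.ne_of_mem_erase hr)]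
    rw [Finset.sum_congr rfl heq, hb x, if_pos rfl]
    have hrfl : (a.support.erase x).sum ⇑a = ∑ r ∈ a.support.erase x, a r := rfl
    omega
  have hprod : (∏ r ∈ b.support, 1 / ((r : ℝ) ^ (b r) * (Nat.factorial (b r) : ℝ)))
      = (x : ℝ) * (a x : ℝ) *
        ∏ r ∈ a.support, 1 / ((r : ℝ) ^ (a r) * (Nat.factorial (a r) : ℝ)) := by
    have h1 : (∏ r ∈ b.support, 1 / ((r : ℝ) ^ (b r) * (Nat.factorial (b r) : ℝ)))
        = ∏ r ∈ a.support, 1 / ((r : ℝ) ^ (b r) * (Nat.factorial (b r) : ℝ)) := by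
      refine Finset.prod_subset hsupp ?_
      intro r _ hr
      rw [Finsupp.notMem_support_iff] at hr
      simp [hr]
    rw [h1, ← Finset.mul_prod_erase _ _ hxmem, ← Finset.mul_prod_erase _
      (fun r : ℕ => 1 / ((r : ℝ) ^ (a r) * (Nat.factorial (a r) : ℝ))) hxmem]
    have heq : ∀ r ∈ a.support.erase x,
        1 / ((r : ℝ) ^ (b r) * (Nat.factorial (b r) : ℝ))
          = 1 / ((r : ℝ) ^ (a r) * (Nat.factorial (a r) : ℝ)) := by
      intro r hr
      rw [hb r, if_neg (Finset.ne_of_mem_erase hr)]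
    rw [Finset.prod_congr rfl heq]
    have hbx : b x = a x - 1 := by rw [hb x, if_pos rfl]
    obtain ⟨m, hm⟩ : ∃ m, a x = m + 1 := ⟨a x - 1, by omega⟩
    have hbxm : b x = m := by omega
    have hxR : (x : ℝ) ≠ 0 := Nat.cast_ne_zero.mpr hx0
    have hxp : (x : ℝ) ^ m ≠ 0 := pow_ne_zero _ hxR
    have hfac : (Nat.factorial m : ℝ) ≠ 0 := Nat.cast_ne_zero.mpr (Nat.factorial_ne_zero _)
    have key : (1:ℝ)/((x:ℝ)^m * (Nat.factorial m : ℝ))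
        = (x:ℝ) * ((m:ℝ)+1) * (1/((x:ℝ)^(m+1) * (Nat.factorial (m+1) : ℝ))) := by
      rw [pow_succ, Nat.factorial_succ]
      push_cast
      field_simp
    rw [hbxm, hm, key]
    push_cast
    ring
  -- main computation
  rw [ewensP, ewensP, hn, hbsum, hprod, ← hbl]
  set l := b.sum fun _ m => m with hl
  set Pa := ∏ r ∈ a.support, 1 / ((r : ℝ) ^ (a r) * (Nat.factorial (a r) : ℝ)) with hPa
  have hPn : (∏ i ∈ Finset.range n, (θ + (i : ℝ))) ≠ 0 := by
    apply Finset.prod_ne_zero_iff.mpr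
    intro i _
    positivity
  have hPnx : (∏ i ∈ Finset.range (n - x), (θ + (i : ℝ))) ≠ 0 := by
    apply Finset.prod_ne_zero_iff.mpr
    intro i _
    positivity
  have hnR : (n : ℝ) ≠ 0 := Nat.cast_ne_zero.mpr hn0
  have hfnx : (Nat.factorial (n - x) : ℝ) ≠ 0 := Nat.cast_ne_zero.mpr (Nat.factorial_ne_zero _)
  have hfact : (Nat.factorial n : ℝ) = (n : ℝ) * (Nat.factorial (n - 1) : ℝ) := by
    obtain ⟨k, hk⟩ : ∃ k, n = k + 1 := ⟨n - 1, by omega⟩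
    subst hk
    rw [Nat.factorial_succ]
    push_cast
    ring
  rw [pow_succ, hfact]
  field_simp
end

section
/- Let 0 ≤ α ≤ 1, θ ≥ 0 with α + θ > 0, and set τ = α/(α+θ). For a partition λ of n with multiplicities (a_r) and ℓ parts, let p(λ) = n!·(θ)_{ℓ↑α}/((θ)_{n↑1}) · ∏_r ((1−α)_{r−1↑1}/r!)^{a_r}·(1/a_r!), and let d(λ,r) = (a_r/n)·((n−r)τ + r(1−τ))/(1−τ+(ℓ−1)τ). Then for every part size r of λ with r < n, the ratio p(λ)·d(λ,r)/p(λ−{r}) depends only on n and r, and equals q(n,r) := C(n,r)·(1−α)_{r−1↑1}·(θ)_{n−r↑1}/((θ)_{n↑1}) · ((n−r)α + r·θ)/n. -/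
/-- The two-parameter `(α,θ)` partition probability function of a partition
encoded by its multiplicity function `a`:
`p(λ) = n!·(θ)_{ℓ↑α}/(θ)_{n↑1} · ∏_r ((1−α)_{r−1↑1}/r!)^{a_r}/a_r!`. -/
noncomputable def pAT (α θ : ℝ) (a : ℕ →₀ ℕ) : ℝ :=
  (Nat.factorial (a.sum fun r m => r * m) : ℝ) *
      (∏ i ∈ Finset.range (a.sum fun _ m => m), (θ + (i : ℝ) * α)) /
      (∏ i ∈ Finset.range (a.sum fun r m => r * m), (θ + (i : ℝ))) *
    ∏ r ∈ a.support,
      ((∏ i ∈ Finset.range (r - 1), (1 - α + (i : ℝ))) / (Nat.factorial r : ℝ)) ^ (a r) /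
        (Nat.factorial (a r) : ℝ)

/-- The `(α,θ)` partition structure is regenerative with respect to the deletion
kernel `d(λ,r) = (a_r/n)·((n−r)τ+r(1−τ))/(1−τ+(ℓ−1)τ)` with `τ = α/(α+θ)`:
`p(λ)·d(λ,r) = q(n,r)·p(λ−{r})` with
`q(n,r) = C(n,r)·(1−α)_{r−1↑1}·(θ)_{n−r↑1}/(θ)_{n↑1}·((n−r)α+rθ)/n`. -/
theorem stmt_11 (α θ : ℝ) (hα0 : 0 ≤ α) (hα1 : α ≤ 1) (hθ : 0 ≤ θ) (hαθ : 0 < α + θ)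
    (n r : ℕ) (a : ℕ →₀ ℕ) (ha0 : a 0 = 0)
    (hn : (a.sum fun s m => s * m) = n) (hr : 1 ≤ a r) (hrn : r < n) :
    pAT α θ a *
        ((a r : ℝ) / (n : ℝ) *
          ((((n : ℝ) - (r : ℝ)) * (α / (α + θ)) + (r : ℝ) * (1 - α / (α + θ))) /
            (1 - α / (α + θ) + (((a.sum fun _ m => m : ℕ) : ℝ) - 1) * (α / (α + θ))))) =
      ((n.choose r : ℝ) * (∏ i ∈ Finset.range (r - 1), (1 - α + (i : ℝ))) *
          (∏ i ∈ Finset.range (n - r), (θ + (i : ℝ))) /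
          (∏ i ∈ Finset.range n, (θ + (i : ℝ))) *
          ((((n : ℝ) - (r : ℝ)) * α + (r : ℝ) * θ) / (n : ℝ))) *
        pAT α θ (a - Finsupp.single r 1) := by
  have hle : Finsupp.single r 1 ≤ a := by
    rw [Finsupp.single_le_iff]; exact hr
  set b := a - Finsupp.single r 1 with hb
  have hab : b + Finsupp.single r 1 = a := tsub_add_cancel_of_le hle
  have hsum1 : (b.sum fun s m => s * m) + r = n := by
    rw [← hn, ← hab, Finsupp.sum_add_index (by simp) (by intros; ring)]
    simp [Finsupp.sum_single_index]
  have hsum2 : (b.sum fun _ m => m) + 1 = (a.sum fun _ m => m) := by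
    rw [← hab, Finsupp.sum_add_index (by simp) (by intros; ring)]
    simp [Finsupp.sum_single_index]
  have hbne : b ≠ 0 := by
    intro h
    rw [h] at hsum1
    simp [Finsupp.sum_zero_index] at hsum1
    omega
  set L := b.sum fun _ m => m with hL
  have hL1 : 1 ≤ L := by
    obtain ⟨s, hs⟩ := Finsupp.support_nonempty_iff.mpr hbne
    calc 1 ≤ b s := Nat.one_le_iff_ne_zero.mpr (Finsupp.mem_support_iff.mp hs)
    _ ≤ _ := Finset.single_le_sum (fun i _ => Nat.zero_le _) hs
  set K := b r with hK
  have hbr : K + 1 = a r := by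
    have := Finsupp.tsub_apply a (Finsupp.single r 1) r
    simp [← hb] at this
    omega
  have hbs : ∀ s, s ≠ r → b s = a s := by
    intro s hs
    have := Finsupp.tsub_apply a (Finsupp.single r 1) s
    simp [← hb, Finsupp.single_apply, Ne.symm hs] at this
    omega
  have hsupp : b.support ⊆ a.support := by
    rw [← hab]; intro s hs
    simp only [Finsupp.mem_support_iff, Finsupp.add_apply] at hs ⊢
    omega
  have hrsupp : r ∈ a.support := Finsupp.mem_support_iff.mpr (by omega)
  have hm : (b.sum fun s m => s * m) = n - r := by omega
  -- the multiplicity products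
  set F := ∏ i ∈ Finset.range (r - 1), (1 - α + (i : ℝ)) with hF
  set E := ∏ s ∈ a.support.erase r,
      ((∏ i ∈ Finset.range (s - 1), (1 - α + (i : ℝ))) / (Nat.factorial s : ℝ)) ^ (a s) /
        (Nat.factorial (a s) : ℝ) with hE
  have hga : (∏ s ∈ a.support,
      ((∏ i ∈ Finset.range (s - 1), (1 - α + (i : ℝ))) / (Nat.factorial s : ℝ)) ^ (a s) /
        (Nat.factorial (a s) : ℝ)) =
      ((F / (Nat.factorial r : ℝ)) * (F / (Nat.factorial r : ℝ)) ^ K /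
        (((K : ℝ) + 1) * (Nat.factorial K : ℝ))) * E := by
    rw [← Finset.mul_prod_erase a.support _ hrsupp, ← hbr]
    rw [Nat.factorial_succ, pow_succ]
    push_cast
    ring
  have hgb : (∏ s ∈ b.support,
      ((∏ i ∈ Finset.range (s - 1), (1 - α + (i : ℝ))) / (Nat.factorial s : ℝ)) ^ (b s) /
        (Nat.factorial (b s) : ℝ)) =
      ((F / (Nat.factorial r : ℝ)) ^ K / (Nat.factorial K : ℝ)) * E := by
    rw [Finset.prod_subset hsupp (by
      intro s _ hs
      simp [Finsupp.notMem_support_iff.mp hs])]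
    rw [← Finset.mul_prod_erase a.support _ hrsupp, ← hK]
    congr 1
    exact Finset.prod_congr rfl fun s hs => by rw [hbs s (Finset.ne_of_mem_erase hs)]
  -- the rising factorial products
  set Qm := ∏ i ∈ Finset.range (n - r), (θ + (i : ℝ)) with hQm
  set R := ∏ i ∈ Finset.range r, (θ + ((n - r : ℕ) : ℝ) + (i : ℝ)) with hR
  have hQn : (∏ i ∈ Finset.range n, (θ + (i : ℝ))) = Qm * R := by
    conv_lhs => rw [show n = n - r + r from by omega, Finset.prod_range_add]
    congr 1
    exact Finset.prod_congr rfl fun i _ => by push_cast; ring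
  set Pm := ∏ i ∈ Finset.range L, (θ + (i : ℝ) * α) with hPm
  have hPl : (∏ i ∈ Finset.range (a.sum fun _ m => m), (θ + (i : ℝ) * α)) =
      Pm * (θ + (L : ℝ) * α) := by
    rw [← hsum2, Finset.prod_range_succ]
  -- unfold pAT
  rw [pAT, pAT, hn, hm, hPl, hQn, hga, hgb, ← hsum2, ← hbr]
  have hfact : (Nat.factorial n : ℝ) =
      (n.choose r : ℝ) * (Nat.factorial r : ℝ) * (Nat.factorial (n - r) : ℝ) := by
    rw_mod_cast [← Nat.choose_mul_factorial_mul_factorial hrn.le]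
  rw [hfact]
  have hnr : ((n - r : ℕ) : ℝ) = (n : ℝ) - (r : ℝ) := by
    push_cast [Nat.cast_sub hrn.le]; ring
  push_cast [hnr]
  rw [← hL, ← hPm, ← hQm]
  rcases eq_or_lt_of_le hθ with hθ0 | hθpos
  · -- θ = 0 : both sides vanish
    have hQm0 : Qm = 0 := by
      rw [hQm]
      exact Finset.prod_eq_zero (Finset.mem_range.mpr (by omega : 0 < n - r))
        (by rw [← hθ0]; norm_num)
    rw [hQm0]
    simp
  · -- θ > 0
    have hQmne : Qm ≠ 0 := by
      rw [hQm]
      exact ne_of_gt (Finset.prod_pos fun i _ => by positivity)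
    have hRne : R ≠ 0 := by
      rw [hR]
      exact ne_of_gt (Finset.prod_pos fun i _ => by positivity)
    have hnne : (n : ℝ) ≠ 0 := Nat.cast_ne_zero.mpr (by omega)
    have hfr : (Nat.factorial r : ℝ) ≠ 0 := Nat.cast_ne_zero.mpr (Nat.factorial_ne_zero _)
    have hfK : (Nat.factorial K : ℝ) ≠ 0 := Nat.cast_ne_zero.mpr (Nat.factorial_ne_zero _)
    have hK1 : (K : ℝ) + 1 ≠ 0 := by positivity
    have hαθne : α + θ ≠ 0 := ne_of_gt hαθ
    have hD : (1 - α / (α + θ) + ((L : ℝ) + 1 - 1) * (α / (α + θ)))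
        = (θ + (L : ℝ) * α) / (α + θ) := by
      field_simp
      ring
    have hθL : θ + (L : ℝ) * α ≠ 0 := by
      have : (0 : ℝ) ≤ (L : ℝ) * α := mul_nonneg (Nat.cast_nonneg _) hα0
      linarith
    rw [hD]
    field_simp
    ring
end

section
/- Let p be a partition probability function on partitions of n and d a deletion kernel such that p(λ)·d(λ,x) = q(n,x)·p(λ−{x}) for all partitions λ of n, all parts x ∈ λ, where q(n,x) := ∑_{λ ⊢ n : x ∈ λ} d(λ,x)·p(λ), and similarly at level n−r with decrement matrix q(n−r,·). Then for any partition λ of n containing two parts r and s (with p(λ−{r}) > 0, p(λ−{s}) > 0, d(λ,r) > 0, d(λ,s) > 0, d(λ−{r},s) > 0, d(λ−{s},r) > 0), one has [q(n,r)/d(λ,r)]·[q(n−r,s)/d(λ−{r},s)] = [q(n,s)/d(λ,s)]·[q(n−s,r)/d(λ−{s},r)]. -/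
/-!
Deleting `r` and then `s` from `λ` and applying the regeneration equation at each step gives
`p(λ)·d(λ,r)·d(λ−{r},s) = q(n,r)·q(n−r,s)·p(λ−{r,s})`, so the left-hand side of the claim equals
`p(λ)/p(λ−{r,s})`. Deleting in the other order yields the same quotient, since
`λ−{r,s}` does not depend on the order, and `p(λ−{r,s}) ≠ 0` because the regeneration equation
writes `p(λ−{r})·d(λ−{r},s) > 0` as a multiple of it.
-/

open Finsupp

theorem Finsupp.one_le_apply_of_one_le_tsub_single {α : Type*} {f : α →₀ ℕ} {r s : α}
    (hs : 1 ≤ (f - single r 1 : α →₀ ℕ) s) : 1 ≤ f s :=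
  hs.trans (by rw [tsub_apply]; exact Nat.sub_le _ _)

theorem Finsupp.one_le_tsub_single_swap {α : Type*} {f : α →₀ ℕ} {r s : α}
    (hr : 1 ≤ f r) (hs : 1 ≤ (f - single r 1 : α →₀ ℕ) s) : 1 ≤ (f - single s 1 : α →₀ ℕ) r := by
  rcases eq_or_ne s r with rfl | hsr
  · exact hs
  · simpa [tsub_apply, single_apply, hsr] using hr

theorem div_mul_div_eq_of_regeneration {p : (ℕ →₀ ℕ) → ℝ} {d : (ℕ →₀ ℕ) → ℕ → ℝ}
    {q : ℕ → ℕ → ℝ}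
    (hreg : ∀ (a : ℕ →₀ ℕ) (x : ℕ), a 0 = 0 → 1 ≤ a x →
      p a * d a x = q (a.sum fun r m => r * m) x * p (a - single x 1))
    {a : ℕ →₀ ℕ} (ha0 : a 0 = 0) {r s : ℕ} (hr : 1 ≤ a r) (hs : 1 ≤ (a - single r 1 : ℕ →₀ ℕ) s)
    (hdr : d a r ≠ 0) (hdrs : d (a - single r 1) s ≠ 0)
    (hp : p (a - single r 1 - single s 1) ≠ 0) :
    q (a.sum fun x m => x * m) r / d a r *
        (q ((a - single r 1).sum fun x m => x * m) s / d (a - single r 1) s) =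
      p a / p (a - single r 1 - single s 1) := by
  have hfirst := hreg a r ha0 hr
  have hsecond := hreg _ s (by rw [tsub_apply, ha0, Nat.zero_sub]) hs
  rw [div_mul_div_comm, div_eq_div_iff (mul_ne_zero hdr hdrs) hp]
  linear_combination -d (a - single r 1) s * hfirst - q (a.sum fun x m => x * m) r * hsecond

theorem stmt_15_general (p : (ℕ →₀ ℕ) → ℝ) (d : (ℕ →₀ ℕ) → ℕ → ℝ) (q : ℕ → ℕ → ℝ)
    (hreg : ∀ (a : ℕ →₀ ℕ) (x : ℕ), a 0 = 0 → 1 ≤ a x →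
      p a * d a x = q (a.sum fun r m => r * m) x * p (a - Finsupp.single x 1))
    (a : ℕ →₀ ℕ) (ha0 : a 0 = 0) (r s : ℕ)
    (hr : 1 ≤ a r) (hs : 1 ≤ ((a - Finsupp.single r 1) : ℕ →₀ ℕ) s)
    (hpr : 0 < p (a - Finsupp.single r 1))
    (hdr : 0 < d a r) (hds : 0 < d a s)
    (hdrs : 0 < d (a - Finsupp.single r 1) s) (hdsr : 0 < d (a - Finsupp.single s 1) r) :
    q (a.sum fun x m => x * m) r / d a r *
        (q ((a - Finsupp.single r 1).sum fun x m => x * m) s / d (a - Finsupp.single r 1) s) =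
      q (a.sum fun x m => x * m) s / d a s *
        (q ((a - Finsupp.single s 1).sum fun x m => x * m) r / d (a - Finsupp.single s 1) r) := by
  have hp : p (a - single r 1 - single s 1) ≠ 0 := by
    intro h
    have hsecond := hreg _ s (by rw [tsub_apply, ha0, Nat.zero_sub]) hs
    rw [h, mul_zero] at hsecond
    exact (mul_pos hpr hdrs).ne' hsecond
  rw [div_mul_div_eq_of_regeneration hreg ha0 hr hs hdr.ne' hdrs.ne' hp,
    div_mul_div_eq_of_regeneration hreg ha0 (one_le_apply_of_one_le_tsub_single hs)
      (one_le_tsub_single_swap hr hs) hds.ne' hdsr.ne' (tsub_right_comm (a := a) ▸ hp),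
    tsub_right_comm]

/-- If a partition probability function `p` is regenerative with respect to a
deletion kernel `d` with decrement matrix `q` at all levels (the regeneration
equation `p(λ)·d(λ,x) = q(|λ|,x)·p(λ−{x})` holds for all partitions `λ` and
parts `x ∈ λ`), then for a partition `λ` of `n` containing parts `r` and `s`,
with the indicated quantities positive,
`[q(n,r)/d(λ,r)]·[q(n−r,s)/d(λ−{r},s)] = [q(n,s)/d(λ,s)]·[q(n−s,r)/d(λ−{s},r)]`.
Partitions are encoded by multiplicity functions `a : ℕ →₀ ℕ` and
`λ−{x}` is `a - Finsupp.single x 1`. -/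
theorem stmt_15 (p : (ℕ →₀ ℕ) → ℝ) (d : (ℕ →₀ ℕ) → ℕ → ℝ) (q : ℕ → ℕ → ℝ)
    (hreg : ∀ (a : ℕ →₀ ℕ) (x : ℕ), a 0 = 0 → 1 ≤ a x →
      p a * d a x = q (a.sum fun r m => r * m) x * p (a - Finsupp.single x 1))
    (a : ℕ →₀ ℕ) (ha0 : a 0 = 0) (r s : ℕ)
    (hr : 1 ≤ a r) (hs : 1 ≤ ((a - Finsupp.single r 1) : ℕ →₀ ℕ) s)
    (hpr : 0 < p (a - Finsupp.single r 1)) (hps : 0 < p (a - Finsupp.single s 1))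
    (hdr : 0 < d a r) (hds : 0 < d a s)
    (hdrs : 0 < d (a - Finsupp.single r 1) s) (hdsr : 0 < d (a - Finsupp.single s 1) r) :
    q (a.sum fun x m => x * m) r / d a r *
        (q ((a - Finsupp.single r 1).sum fun x m => x * m) s / d (a - Finsupp.single r 1) s) =
      q (a.sum fun x m => x * m) s / d a s *
        (q ((a - Finsupp.single s 1).sum fun x m => x * m) r / d (a - Finsupp.single s 1) r) :=
  stmt_15_general p d q hreg a ha0 r s hr hs hpr hdr hds hdrs hdsr
end
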